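/- arXiv:math/0503389 — 2 statements merged into one kernel-verified Lean document; each statement's English description precedes it below -/
import Mathlib

section
/- Let X be a finite set of points in ℝⁿ such that the group G of isometries generated by the point-reflexions through the points of X is discrete. Then X is rational, i.e., there is an affine coordinate system with respect to which all points of X have rational coordinates. -/
set_option maxHeartbeats 1000000

/-- If the group generated by the point-reflexions through the points of a
finite set `X ⊆ ℝⁿ` is discrete (equivalently, the additive subgroup of translation
vectors `2 • (p - q)`, `p, q ∈ X`, is discrete), then `X` is rational: there is a point
`x₀ ∈ X` and a real basis with respect to which every `x - x₀` (`x ∈ X`) has rational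
coordinates. -/
theorem rational_of_discrete (n : ℕ) (X : Finset (EuclideanSpace ℝ (Fin n)))
    (hX : X.Nonempty)
    (hdisc : DiscreteTopology
      (AddSubgroup.closure
        {v : EuclideanSpace ℝ (Fin n) | ∃ p ∈ X, ∃ q ∈ X, v = (2 : ℝ) • (p - q)})) :
    ∃ x₀ ∈ X, ∃ b : Module.Basis (Fin n) ℝ (EuclideanSpace ℝ (Fin n)),
      ∀ x ∈ X, ∀ i, ∃ q : ℚ, b.repr (x - x₀) i = (q : ℝ) := by
  obtain ⟨x₀, hx₀⟩ := hX
  refine ⟨x₀, hx₀, ?_⟩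
  set S : Set (EuclideanSpace ℝ (Fin n)) :=
    {v | ∃ p ∈ X, ∃ q ∈ X, v = (2 : ℝ) • (p - q)} with hS
  set L : Submodule ℤ (EuclideanSpace ℝ (Fin n)) :=
    AddSubgroup.toIntSubmodule (AddSubgroup.closure S) with hLdef
  haveI hdL : DiscreteTopology L := hdisc
  set E : Submodule ℝ (EuclideanSpace ℝ (Fin n)) := Submodule.span ℝ (L : Set _) with hEdef
  have hmemL : ∀ x ∈ X, (2 : ℝ) • (x - x₀) ∈ L := fun x hx =>
    AddSubgroup.subset_closure ⟨x, hx, x₀, hx₀, rfl⟩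
  have hLE : (L : Set (EuclideanSpace ℝ (Fin n))) ⊆ (E : Set _) := Submodule.subset_span
  have hmemE : ∀ x ∈ X, x - x₀ ∈ E := by
    intro x hx
    have h2 : (2 : ℝ) • (x - x₀) ∈ E := hLE (hmemL x hx)
    have h3 := E.smul_mem (2⁻¹ : ℝ) h2
    simpa [smul_smul] using h3
  set L' : Submodule ℤ E := Submodule.comap (E.subtype.restrictScalars ℤ) L with hL'def
  -- L' is discrete
  haveI hdL' : DiscreteTopology L' := by
    have hemb : Topology.IsEmbedding (fun x : L' => (⟨(x : E), x.2⟩ : L)) := by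
      apply Topology.IsEmbedding.of_comp (g := (Subtype.val : L → EuclideanSpace ℝ (Fin n)))
      · exact Continuous.subtype_mk (continuous_subtype_val.comp continuous_subtype_val) _
      · exact continuous_subtype_val
      · have hc : (Subtype.val : L → EuclideanSpace ℝ (Fin n)) ∘
            (fun x : L' => (⟨(x : E), x.2⟩ : L)) =
            (Subtype.val : E → EuclideanSpace ℝ (Fin n)) ∘ (Subtype.val : L' → E) := rfl
        rw [hc]
        exact Topology.IsEmbedding.subtypeVal.comp Topology.IsEmbedding.subtypeVal
    exact hemb.discreteTopology
  -- L' spans E over ℝ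
  haveI hzl : IsZLattice ℝ L' := by
    constructor
    have himg : E.subtype '' (L' : Set E) = (L : Set (EuclideanSpace ℝ (Fin n))) := by
      ext v
      constructor
      · rintro ⟨y, hy, rfl⟩; exact hy
      · intro hv; exact ⟨⟨v, hLE hv⟩, hv, rfl⟩
    have hinj : Function.Injective (Submodule.map E.subtype) :=
      Submodule.map_injective_of_injective E.injective_subtype
    apply hinj
    rw [Submodule.map_span, Submodule.map_subtype_top]
    change Submodule.span ℝ (E.subtype '' (L' : Set E)) = E
    rw [himg]
  haveI : Module.Free ℤ L' := ZLattice.module_free ℝ L'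
  haveI : Module.Finite ℤ L' := ZLattice.module_finite ℝ L'
  set ι := Module.Free.ChooseBasisIndex ℤ L' with hι
  set b₀ : Module.Basis ι ℤ L' := Module.Free.chooseBasis ℤ L' with hb₀
  set bE : Module.Basis ι ℝ E := b₀.ofZLatticeBasis ℝ L' with hbE
  obtain ⟨F, hF⟩ := Submodule.exists_isCompl E
  set bF : Module.Basis (Fin (Module.finrank ℝ F)) ℝ F := Module.finBasis ℝ F with hbF
  have hcard : Fintype.card (ι ⊕ Fin (Module.finrank ℝ F)) = n := by
    have h1 : Fintype.card ι = Module.finrank ℝ E := by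
      rw [← ZLattice.rank ℝ L']
      exact (Module.finrank_eq_card_chooseBasisIndex ℤ ↥L').symm
    have h2 := Submodule.finrank_add_eq_of_isCompl hF
    have h3 : Module.finrank ℝ (EuclideanSpace ℝ (Fin n)) = n := finrank_euclideanSpace_fin
    rw [Fintype.card_sum, h1, Fintype.card_fin, h2, h3]
  set e : (ι ⊕ Fin (Module.finrank ℝ F)) ≃ Fin n := Fintype.equivFinOfCardEq hcard with he
  set b' : Module.Basis (ι ⊕ Fin (Module.finrank ℝ F)) ℝ (EuclideanSpace ℝ (Fin n)) :=
    (bE.prod bF).map (Submodule.prodEquivOfIsCompl E F hF) with hb'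
  refine ⟨b'.reindex e, ?_⟩
  intro x hx i
  rw [Module.Basis.repr_reindex_apply]
  set v : E := ⟨x - x₀, hmemE x hx⟩ with hv
  have hsymm : (Submodule.prodEquivOfIsCompl E F hF).symm (x - x₀) = (v, 0) := by
    rw [show (x - x₀) = ((v : E) : EuclideanSpace ℝ (Fin n)) from rfl]
    exact Submodule.prodEquivOfIsCompl_symm_apply_left E F hF v
  have hrepr : ∀ j, b'.repr (x - x₀) j = (bE.prod bF).repr (v, 0) j := by
    intro j
    rw [hb', Module.Basis.map_repr]
    simp only [LinearEquiv.trans_apply]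
    rw [hsymm]
  rcases hsj : e.symm i with j | j
  · -- coordinate from E: bE.repr v j is half an integer
    set w : L' := ⟨(2 : ℝ) • v, by
      show (((2 : ℝ) • v : E) : EuclideanSpace ℝ (Fin n)) ∈ L
      simpa using hmemL x hx⟩ with hw
    have hkey : bE.repr ((w : E)) j = ((b₀.repr w j : ℤ) : ℝ) :=
      b₀.ofZLatticeBasis_repr_apply ℝ L' w j
    have h2v : ((w : E)) = (2 : ℝ) • v := rfl
    rw [h2v, map_smul, Finsupp.smul_apply, smul_eq_mul] at hkey
    refine ⟨(b₀.repr w j : ℤ) / 2, ?_⟩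
    rw [hrepr, Module.Basis.prod_repr_inl]
    push_cast
    linarith
  · refine ⟨0, ?_⟩
    rw [hrepr, Module.Basis.prod_repr_inr]
    show bF.repr 0 j = ((0 : ℚ) : ℝ)
    rw [map_zero]
    simp
end

section
/- Let Γ be a group generated by elements σ₁, …, σ_{n−1}, and suppose there exists an involution ρ₀ ∈ Γ such that ρ₀ σ₁ ρ₀ = σ₁⁻¹, ρ₀ σ₂ ρ₀ = σ₁² σ₂, and ρ₀ σⱼ ρ₀ = σⱼ for j ≥ 3. Define ρⱼ for j ≥ 1 recursively by ρⱼ := ρ_{j−1} σⱼ. Then each ρⱼ is an involution and σⱼ = ρ_{j−1} ρⱼ for j = 1, …, n−1, so Γ = ⟨ρ₀, …, ρ_{n−1}⟩. -/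
/-- If a group `Γ` is generated by `σ₁, …, σ_{n-1}` satisfying the chiral
relations `(σⱼ ⋯ σ_k)² = 1`, and there is an involution `ρ₀` with `ρ₀σ₁ρ₀ = σ₁⁻¹`,
`ρ₀σ₂ρ₀ = σ₁²σ₂` and `ρ₀σⱼρ₀ = σⱼ` for `j ≥ 3`, then the elements `ρⱼ` defined
recursively by `ρⱼ = ρ_{j-1}σⱼ` are involutions with `σⱼ = ρ_{j-1}ρⱼ`, and
`Γ = ⟨ρ₀, …, ρ_{n-1}⟩`. -/
theorem regular_of_adjoin_involution {Γ : Type*} [Group Γ] (n : ℕ) (hn : 2 ≤ n)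
    (σ : ℕ → Γ)
    (hgen : Subgroup.closure {g | ∃ j, 1 ≤ j ∧ j ≤ n - 1 ∧ g = σ j} = ⊤)
    (hrel : ∀ j k, 1 ≤ j → j ≤ k → k ≤ n - 1 →
      (((List.range' j (k - j + 1)).map σ).prod) ^ 2 = 1)
    (ρ₀ : Γ) (hρ₀ : ρ₀ * ρ₀ = 1)
    (h1 : ρ₀ * σ 1 * ρ₀ = (σ 1)⁻¹)
    (h2 : ρ₀ * σ 2 * ρ₀ = (σ 1) ^ 2 * σ 2)
    (h3 : ∀ j, 3 ≤ j → j ≤ n - 1 → ρ₀ * σ j * ρ₀ = σ j) :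
    let ρ : ℕ → Γ := fun j => Nat.rec ρ₀ (fun k r => r * σ (k + 1)) j
    (∀ j ≤ n - 1, ρ j * ρ j = 1) ∧
      (∀ j, 1 ≤ j → j ≤ n - 1 → σ j = ρ (j - 1) * ρ j) ∧
      Subgroup.closure {g | ∃ j ≤ n - 1, g = ρ j} = ⊤ := by
  intro ρ
  set P : ℕ → Γ := fun j => ((List.range' 1 j).map σ).prod with hPdef
  have hP : ∀ j, ρ j = ρ₀ * P j := by
    intro j
    induction j with
    | zero => simp [hPdef, ρ]
    | succ k ih =>
      show ρ k * σ (k + 1) = ρ₀ * P (k + 1)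
      rw [ih]
      have : P (k + 1) = P k * σ (k + 1) := by
        simp [hPdef, List.range'_concat, Nat.add_comm 1 k]
      rw [this, mul_assoc]
  have key : ∀ a b : Γ, ρ₀ * (a * b) * ρ₀ = (ρ₀ * a * ρ₀) * (ρ₀ * b * ρ₀) := by
    intro a b
    rw [show (ρ₀ * a * ρ₀) * (ρ₀ * b * ρ₀) = ρ₀ * a * (ρ₀ * ρ₀) * (b * ρ₀) by group, hρ₀]
    group
  have hconj : ∀ j, 2 ≤ j → j ≤ n - 1 → ρ₀ * P j * ρ₀ = P j := by
    intro j h2j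
    induction j, h2j using Nat.le_induction with
    | base =>
      intro _
      have : P 2 = σ 1 * σ 2 := by simp [hPdef, List.range']
      rw [this]
      calc ρ₀ * (σ 1 * σ 2) * ρ₀ = (ρ₀ * σ 1 * ρ₀) * (ρ₀ * σ 2 * ρ₀) := key _ _
        _ = σ 1 * σ 2 := by rw [h1, h2]; group
    | succ k hk ih =>
      intro hle
      have hk' : k ≤ n - 1 := le_trans (Nat.le_succ k) hle
      have hPk : P (k + 1) = P k * σ (k + 1) := by
        simp [hPdef, List.range'_concat, Nat.add_comm 1 k]
      rw [hPk]
      calc ρ₀ * (P k * σ (k + 1)) * ρ₀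
          = (ρ₀ * P k * ρ₀) * (ρ₀ * σ (k + 1) * ρ₀) := key _ _
        _ = P k * σ (k + 1) := by
            rw [ih hk', h3 (k + 1) (by omega) hle]
  have hsq : ∀ j ≤ n - 1, ρ j * ρ j = 1 := by
    intro j hj
    rcases Nat.lt_or_ge j 2 with hj2 | hj2
    · interval_cases j
      · exact hρ₀
      · show (ρ₀ * σ 1) * (ρ₀ * σ 1) = 1
        calc (ρ₀ * σ 1) * (ρ₀ * σ 1) = (ρ₀ * σ 1 * ρ₀) * σ 1 := by group
          _ = 1 := by rw [h1]; group
    · rw [hP j]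
      have hPsq : P j * P j = 1 := by
        have := hrel 1 j le_rfl (by omega) hj
        have hjj : j - 1 + 1 = j := by omega
        rw [hjj] at this
        rw [← sq]; exact this
      calc ρ₀ * P j * (ρ₀ * P j) = (ρ₀ * P j * ρ₀) * P j := by group
        _ = P j * P j := by rw [hconj j hj2 hj]
        _ = 1 := hPsq
  refine ⟨hsq, ?_, ?_⟩
  · intro j h1j hj
    have hρj : ρ j = ρ (j - 1) * σ j := by
      have : j - 1 + 1 = j := by omega
      conv_lhs => rw [← this]
      show ρ (j - 1) * σ (j - 1 + 1) = ρ (j - 1) * σ j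
      rw [this]
    rw [hρj, ← mul_assoc, hsq (j - 1) (by omega), one_mul]
  · rw [eq_top_iff, ← hgen, Subgroup.closure_le]
    rintro g ⟨j, h1j, hj, rfl⟩
    have hρj : ρ j = ρ (j - 1) * σ j := by
      have : j - 1 + 1 = j := by omega
      conv_lhs => rw [← this]
      show ρ (j - 1) * σ (j - 1 + 1) = ρ (j - 1) * σ j
      rw [this]
    have : σ j = ρ (j - 1) * ρ j := by
      rw [hρj, ← mul_assoc, hsq (j - 1) (by omega), one_mul]
    rw [this]
    exact mul_mem (Subgroup.subset_closure ⟨j - 1, by omega, rfl⟩)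
      (Subgroup.subset_closure ⟨j, hj, rfl⟩)
end
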